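/- arXiv:2207.11000 — 2 statements merged into one kernel-verified Lean document; each statement's English description precedes it below -/
import Mathlib

section
/- The streamlining procedure applied to a structured deterministic parity automaton terminates: every transition's color is changed at most once, and once the counter exceeds the maximal color of the original automaton, the coloring graph is empty. -/
open Classical

universe u v

/-- A deterministic parity automaton with transition-based acceptance. -/
structure DPA (Q : Type u) (A : Type v) where
  init : Q
  trans : Q → A → Q
  color : Q → A → ℕ

/-- A word (or a color sequence) hits value `c` infinitely often. -/
def InfOften (f : ℕ → ℕ) (c : ℕ) : Prop := ∀ N, ∃ n, N ≤ n ∧ f n = c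

namespace DPA

variable {Q : Type u} {A : Type v}

/-- The unique run of a DPA from state `q` on infinite word `w`. -/
def runFrom (M : DPA Q A) (q : Q) (w : ℕ → A) : ℕ → Q
  | 0 => q
  | n + 1 => M.trans (M.runFrom q w n) (w n)

/-- The color sequence of the run from `q` on `w`. -/
def colorsFrom (M : DPA Q A) (q : Q) (w : ℕ → A) (n : ℕ) : ℕ :=
  M.color (M.runFrom q w n) (w n)

/-- The dominating (least infinitely often occurring) color of the run from `q` on `w`. -/
noncomputable def domColorFrom (M : DPA Q A) (q : Q) (w : ℕ → A) : ℕ :=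
  sInf {c | InfOften (M.colorsFrom q w) c}

/-- Parity acceptance from a state. -/
def acceptsFrom (M : DPA Q A) (q : Q) (w : ℕ → A) : Prop :=
  Even (M.domColorFrom q w)

def langFrom (M : DPA Q A) (q : Q) : Set (ℕ → A) := {w | M.acceptsFrom q w}

def lang (M : DPA Q A) : Set (ℕ → A) := M.langFrom M.init

/-- Language equivalence of states. -/
def LangEquiv (M : DPA Q A) (q q' : Q) : Prop := M.langFrom q = M.langFrom q'

/-- Reachability in the transition structure. -/
def Reach (M : DPA Q A) : Q → Q → Prop :=
  Relation.ReflTransGen (fun a b => ∃ x, M.trans a x = b)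

/-- A DPA is structured: all states reachable, and language-equivalent states are
mutually reachable (same maximal SCC). -/
def Structured (M : DPA Q A) : Prop :=
  (∀ q, M.Reach M.init q) ∧
  ∀ q q', M.LangEquiv q q' → M.Reach q q' ∧ M.Reach q' q

noncomputable def maxColor (M : DPA Q A) [Fintype Q] [Fintype A] : ℕ :=
  Finset.univ.sup fun t : Q × A => M.color t.1 t.2

/-- Same transition structure, new coloring. -/
def recolor (M : DPA Q A) (c : Q × A → ℕ) : DPA Q A :=
  ⟨M.init, M.trans, fun q x => c (q, x)⟩

/-- Extension of the transition function to finite words. -/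
def runList (M : DPA Q A) (q : Q) (u : List A) : Q := u.foldl M.trans q

end DPA

/-- A (nondeterministic) automaton with colored transitions; used as co-Büchi automaton
(colors 1 = rejecting, 2 = accepting). -/
structure NCA (Q : Type u) (A : Type v) where
  inits : Set Q
  trans : Set (Q × A × Q × ℕ)

namespace NCA

variable {Q : Type u} {A : Type v}

def IsRun (N : NCA Q A) (w : ℕ → A) (ρ : ℕ → Q) (γ : ℕ → ℕ) : Prop :=
  ρ 0 ∈ N.inits ∧ ∀ n, (ρ n, w n, ρ (n + 1), γ n) ∈ N.trans

/-- Co-Büchi acceptance: some run takes rejecting transitions only finitely often,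
i.e. from some point on only accepting (color 2) transitions. -/
def accepts (N : NCA Q A) (w : ℕ → A) : Prop :=
  ∃ ρ γ, N.IsRun w ρ γ ∧ ∃ p, ∀ n, p ≤ n → γ n = 2

/-- A finite run prefix on a finite word. -/
def FinRunOn (N : NCA Q A) (xs : List A) (ρ : ℕ → Q) (γ : ℕ → ℕ) : Prop :=
  ρ 0 ∈ N.inits ∧ ∀ k (hk : k < xs.length), (ρ k, xs[k], ρ (k + 1), γ k) ∈ N.trans

end NCA

namespace DPA

variable {Q : Type u} {A : Type v}

/-- The co-Büchi automaton `A_i` derived from a DPA: transitions of color ≥ i become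
accepting (2), those of color < i rejecting (1), plus rejecting transitions to every
state language-equivalent to the deterministic successor that is not already a target. -/
def derived (M : DPA Q A) (i : ℕ) : NCA Q A where
  inits := {M.init}
  trans :=
    {t | ∃ q x, t = (q, x, M.trans q x, if i ≤ M.color q x then 2 else 1)} ∪
    {t | ∃ q x q'', q'' ≠ M.trans q x ∧ M.LangEquiv q'' (M.trans q x) ∧ t = (q, x, q'', 1)}

end DPA

/-- State of the streamlining procedure: remaining coloring graph (as set of transitions,
identified by source state and letter), current color assignment, and counter. -/
structure SState (Q : Type u) (A : Type v) where
  graph : Set (Q × A)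
  col : Q × A → ℕ
  counter : ℕ

namespace DPA

variable {Q : Type u} {A : Type v}

/-- Edge relation of the coloring graph `G`. -/
def edgeIn (M : DPA Q A) (G : Set (Q × A)) (a b : Q) : Prop :=
  ∃ x, (a, x) ∈ G ∧ M.trans a x = b

def reachIn (M : DPA Q A) (G : Set (Q × A)) : Q → Q → Prop :=
  Relation.ReflTransGen (M.edgeIn G)

def SameSCC (M : DPA Q A) (G : Set (Q × A)) (a b : Q) : Prop :=
  M.reachIn G a b ∧ M.reachIn G b a

/-- A transition is transient in `G` if it lies on no cycle of `G`. -/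
def Transient (M : DPA Q A) (G : Set (Q × A)) (t : Q × A) : Prop :=
  ¬ M.reachIn G (M.trans t.1 t.2) t.1

/-- The least color (under `col`) of transitions lying within the SCC of `q` in `G`. -/
noncomputable def sccMinCol (M : DPA Q A) (G : Set (Q × A)) (col : Q × A → ℕ) (q : Q) : ℕ :=
  sInf {c | ∃ p x, (p, x) ∈ G ∧ M.SameSCC G p q ∧ M.SameSCC G (M.trans p x) q ∧
    col (p, x) = c}

/-- One step of the streamlining procedure (Carton–Maceiras style):
recolor/remove transient transitions if any; otherwise recolor/remove minimal-color
transitions of SCCs whose minimal color has the counter's parity if any;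
otherwise increment the counter. -/
noncomputable def streamStep (M : DPA Q A) (s : SState Q A) : SState Q A :=
  if s.graph = ∅ then s
  else
    let T := {t ∈ s.graph | M.Transient s.graph t}
    if T ≠ ∅ then
      ⟨s.graph \ T, fun t => if t ∈ T then s.counter else s.col t, s.counter⟩
    else
      let R := {t ∈ s.graph | M.SameSCC s.graph t.1 (M.trans t.1 t.2) ∧
        s.col t = M.sccMinCol s.graph s.col t.1 ∧ s.col t % 2 = s.counter % 2}
      if R ≠ ∅ then
        ⟨s.graph \ R, fun t => if t ∈ R then s.counter else s.col t, s.counter⟩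
      else ⟨s.graph, s.col, s.counter + 1⟩

/-- The streamlining procedure after `n` steps, starting from the full transition graph
with the original colors and counter 0. -/
noncomputable def streamRun (M : DPA Q A) (n : ℕ) : SState Q A :=
  (M.streamStep)^[n] ⟨Set.univ, fun t => M.color t.1 t.2, 0⟩

/-- A co-run: follow the run for a finite prefix, then once jump to a language-equivalent
state and follow the deterministic transitions from there. -/
def IsCoRun (M : DPA Q A) (w : ℕ → A) (σ : ℕ → Q) : Prop :=
  ∃ p, 0 < p ∧ (∀ n, n < p → σ n = M.runFrom M.init w n) ∧
    M.LangEquiv (σ p) (M.runFrom M.init w p) ∧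
    ∀ n, p ≤ n → σ (n + 1) = M.trans (σ n) (w n)

/-- The dominating (least infinitely often occurring) color along a co-run. -/
noncomputable def coRunDom (M : DPA Q A) (w : ℕ → A) (σ : ℕ → Q) : ℕ :=
  sInf {c | InfOften (fun n => M.color (σ n) (w n)) c}

/-- An accepting SCC (for threshold color `i`): a nonempty state set with a nonempty set of
transitions of color ≥ i among them that is strongly connected. -/
def AccSCC (M : DPA Q A) (i : ℕ) (S : Set Q) (T : Set (Q × A)) : Prop :=
  S.Nonempty ∧ T.Nonempty ∧
  (∀ t ∈ T, t.1 ∈ S ∧ M.trans t.1 t.2 ∈ S ∧ i ≤ M.color t.1 t.2) ∧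
  ∀ q ∈ S, ∀ q' ∈ S,
    Relation.ReflTransGen (fun a b => ∃ x, (a, x) ∈ T ∧ M.trans a x = b) q q'

/-- Redirect the transition `(s, x)` to target `q'` instead. -/
noncomputable def redirect (M : DPA Q A) (s : Q) (x : A) (q' : Q) : DPA Q A :=
  ⟨M.init, fun a y => if a = s ∧ y = x then q' else M.trans a y, M.color⟩

end DPA

section Words

variable {A : Type v} [Inhabited A]

/-- Prepend a finite word to an infinite word. -/
def listApp (u : List A) (w : ℕ → A) : ℕ → A :=
  fun n => if n < u.length then u.getD n default else w (n - u.length)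

/-- The suffix language of `L` after the finite word `u`. -/
def suffixLang (L : Set (ℕ → A)) (u : List A) : Set (ℕ → A) :=
  {w | listApp u w ∈ L}

/-- `u` is suffix-language-invariant for `L` after `w`. -/
def SuffixInv (L : Set (ℕ → A)) (u w : List A) : Prop :=
  suffixLang L w = suffixLang L (w ++ u)

/-- The first `n` letters of an infinite word. -/
def prefixList (w : ℕ → A) (n : ℕ) : List A := (List.range n).map w

/-- The finite segment `w a, w (a+1), ..., w (b-1)` of an infinite word. -/
def seg (w : ℕ → A) (a b : ℕ) : List A := (List.range (b - a)).map fun k => w (a + k)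

/-- `w'` results from a suffix-language-invariant injection of finite words into `w`
at the positions in `J`: there is a monotone reindexing `f` of the letters of `w`, the
gaps occur only after positions in `J`, and each inserted segment is
suffix-language-invariant for `L` after the corresponding prefix of `w`. -/
def IsInj (L : Set (ℕ → A)) (w : ℕ → A) (J : Set ℕ) (w' : ℕ → A) : Prop :=
  ∃ f : ℕ → ℕ, f 0 = 0 ∧ (∀ n, w' (f n) = w n) ∧
    (∀ n, n ∉ J → f (n + 1) = f n + 1) ∧
    (∀ n, n ∈ J → f n < f (n + 1) ∧
      SuffixInv L (seg w' (f n + 1) (f (n + 1))) (prefixList w (n + 1)))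

/-- `w` is at home in color `i` for the language `L`. -/
def AtHome (L : Set (ℕ → A)) (i : ℕ) (w : ℕ → A) : Prop :=
  ∃ J : Set ℕ, J.Infinite ∧ ∀ w', IsInj L w J w' →
    (∃ i', ∃ _ : i' < i, AtHome L i' w') ∨
    ((w ∈ L ∧ w' ∈ L ∧ Even i) ∨ (w ∉ L ∧ w' ∉ L ∧ Odd i))
  termination_by i

/-- The natural color of `w` for `L`: the least color `w` is at home in. -/
noncomputable def naturalColor (L : Set (ℕ → A)) (w : ℕ → A) : ℕ :=
  sInf {i | AtHome L i w}

/-- The ultimately periodic word `u v^ω`. -/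
def upw (u v : List A) : ℕ → A :=
  fun n => if n < u.length then u.getD n default
           else v.getD ((n - u.length) % v.length) default

/-- Insert the finite word `u` immediately after position `j` of `w`. -/
def insertWord (w : ℕ → A) (j : ℕ) (u : List A) : ℕ → A :=
  fun n => if n ≤ j then w n
           else if n - (j + 1) < u.length then u.getD (n - (j + 1)) default
           else w (n - u.length)

end Words

section StreamAux

variable {Q : Type u} {A : Type v}

lemma streamAux_increment (M : DPA Q A) (s : SState Q A)
    (hcol : ∀ t ∈ s.graph, s.counter ≤ s.col t)
    (hT : {t ∈ s.graph | M.Transient s.graph t} = ∅)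
    (hR : {t ∈ s.graph | M.SameSCC s.graph t.1 (M.trans t.1 t.2) ∧
        s.col t = M.sccMinCol s.graph s.col t.1 ∧ s.col t % 2 = s.counter % 2} = ∅)
    {t : Q × A} (ht : t ∈ s.graph) : s.counter + 1 ≤ s.col t := by
  rcases lt_or_eq_of_le (hcol t ht) with h | h
  · omega
  · exfalso
    have hnt : ¬ M.Transient s.graph t := by
      intro htr
      have : t ∈ ({t ∈ s.graph | M.Transient s.graph t} : Set (Q × A)) := ⟨ht, htr⟩
      rw [hT] at this; exact this
    have hback : M.reachIn s.graph (M.trans t.1 t.2) t.1 := not_not.mp hnt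
    have hfwd : M.reachIn s.graph t.1 (M.trans t.1 t.2) :=
      Relation.ReflTransGen.single ⟨t.2, ht, rfl⟩
    have hscc : M.SameSCC s.graph t.1 (M.trans t.1 t.2) := ⟨hfwd, hback⟩
    have hmemS : s.col t ∈ {c | ∃ p x, (p, x) ∈ s.graph ∧ M.SameSCC s.graph p t.1 ∧
        M.SameSCC s.graph (M.trans p x) t.1 ∧ s.col (p, x) = c} :=
      ⟨t.1, t.2, ht, ⟨Relation.ReflTransGen.refl, Relation.ReflTransGen.refl⟩,
        ⟨hback, hfwd⟩, rfl⟩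
    have hmin : M.sccMinCol s.graph s.col t.1 = s.col t := by
      unfold DPA.sccMinCol
      refine le_antisymm (Nat.sInf_le hmemS) (le_csInf ⟨_, hmemS⟩ ?_)
      rintro b ⟨p, x, hpx, -, -, rfl⟩
      rw [← h]; exact hcol (p, x) hpx
    have : t ∈ ({t ∈ s.graph | M.SameSCC s.graph t.1 (M.trans t.1 t.2) ∧
        s.col t = M.sccMinCol s.graph s.col t.1 ∧ s.col t % 2 = s.counter % 2} : Set (Q × A)) :=
      ⟨ht, hscc, hmin.symm, by rw [← h]⟩
    rw [hR] at this; exact this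

lemma streamAux_graph_subset (M : DPA Q A) (s : SState Q A) :
    (M.streamStep s).graph ⊆ s.graph := by
  simp only [DPA.streamStep]
  split_ifs with hg hT hR
  · exact le_refl _
  · exact Set.diff_subset
  · exact Set.diff_subset
  · exact le_refl _

lemma streamAux_col_of_not_mem (M : DPA Q A) (s : SState Q A) {t : Q × A}
    (ht : t ∉ s.graph) : (M.streamStep s).col t = s.col t := by
  simp only [DPA.streamStep]
  split_ifs with hg hT hR
  · rfl
  · dsimp only; exact if_neg fun h => ht h.1
  · dsimp only; exact if_neg fun h => ht h.1
  · rfl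

lemma streamAux_inv (M : DPA Q A) (s : SState Q A)
    (h1 : ∀ t ∈ s.graph, s.col t = M.color t.1 t.2)
    (h2 : ∀ t ∈ s.graph, s.counter ≤ s.col t) :
    (∀ t ∈ (M.streamStep s).graph, (M.streamStep s).col t = M.color t.1 t.2) ∧
    (∀ t ∈ (M.streamStep s).graph, (M.streamStep s).counter ≤ (M.streamStep s).col t) := by
  simp only [DPA.streamStep]
  split_ifs with hg hT hR
  · exact ⟨h1, h2⟩
  · refine ⟨fun t htm => ?_, fun t htm => ?_⟩ <;>
    · dsimp only at htm ⊢
      rw [Set.mem_diff] at htm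
      rw [if_neg htm.2]
      first | exact h1 t htm.1 | exact h2 t htm.1
  · refine ⟨fun t htm => ?_, fun t htm => ?_⟩ <;>
    · dsimp only at htm ⊢
      rw [Set.mem_diff] at htm
      rw [if_neg htm.2]
      first | exact h1 t htm.1 | exact h2 t htm.1
  · exact ⟨h1, fun t ht =>
      streamAux_increment M s h2 (not_ne_iff.mp hT) (not_ne_iff.mp hR) ht⟩

lemma streamAux_le_max [Fintype Q] [Fintype A] (M : DPA Q A) (t : Q × A) :
    M.color t.1 t.2 ≤ M.maxColor :=
  Finset.le_sup (f := fun t : Q × A => M.color t.1 t.2) (Finset.mem_univ t)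

lemma streamAux_measure [Fintype Q] [Fintype A] (M : DPA Q A) (s : SState Q A)
    (h1 : ∀ t ∈ s.graph, s.col t = M.color t.1 t.2)
    (h2 : ∀ t ∈ s.graph, s.counter ≤ s.col t)
    (hg : s.graph ≠ ∅) :
    (M.maxColor + 1 - (M.streamStep s).counter) + (M.streamStep s).graph.ncard <
      (M.maxColor + 1 - s.counter) + s.graph.ncard := by
  have hcmax : s.counter ≤ M.maxColor := by
    obtain ⟨t, ht⟩ := Set.nonempty_iff_ne_empty.mpr hg
    calc s.counter ≤ s.col t := h2 t ht
      _ = M.color t.1 t.2 := h1 t ht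
      _ ≤ M.maxColor := streamAux_le_max M t
  simp only [DPA.streamStep]
  split_ifs with hg' hT hR
  · exact absurd hg' hg
  · obtain ⟨t0, ht0⟩ := Set.nonempty_iff_ne_empty.mpr hT
    have hss : s.graph \ {t ∈ s.graph | M.Transient s.graph t} ⊂ s.graph :=
      (Set.ssubset_iff_of_subset Set.diff_subset).mpr
        ⟨t0, ht0.1, fun hd => hd.2 ht0⟩
    have := Set.ncard_lt_ncard hss (Set.toFinite _)
    simp only [SState.graph, SState.counter]
    omega
  · obtain ⟨t0, ht0⟩ := Set.nonempty_iff_ne_empty.mpr hR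
    have hss : s.graph \ {t ∈ s.graph | M.SameSCC s.graph t.1 (M.trans t.1 t.2) ∧
        s.col t = M.sccMinCol s.graph s.col t.1 ∧ s.col t % 2 = s.counter % 2} ⊂ s.graph :=
      (Set.ssubset_iff_of_subset Set.diff_subset).mpr
        ⟨t0, ht0.1, fun hd => hd.2 ht0⟩
    have := Set.ncard_lt_ncard hss (Set.toFinite _)
    simp only [SState.graph, SState.counter]
    omega
  · simp only [SState.graph, SState.counter]
    omega

end StreamAux

/-- The streamlining procedure applied to a structured DPA terminates:
every transition's color is changed at most once (once changed, it stays), and once the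
counter exceeds the maximal original color the coloring graph is empty (in particular
the procedure reaches the empty coloring graph). -/
theorem streamlining_terminates {Q : Type u} {A : Type v} [Fintype Q] [Fintype A]
    (M : DPA Q A) (hM : M.Structured) :
    (∃ n, (M.streamRun n).graph = ∅) ∧
    (∀ (t : Q × A) (n m : ℕ), n ≤ m → (M.streamRun n).col t ≠ M.color t.1 t.2 →
      (M.streamRun m).col t = (M.streamRun n).col t) ∧
    (∀ n, M.maxColor < (M.streamRun n).counter → (M.streamRun n).graph = ∅) := by
  have hsucc : ∀ n, M.streamRun (n + 1) = M.streamStep (M.streamRun n) := fun n =>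
    Function.iterate_succ_apply' _ _ _
  have hinv : ∀ n, (∀ t ∈ (M.streamRun n).graph, (M.streamRun n).col t = M.color t.1 t.2) ∧
      (∀ t ∈ (M.streamRun n).graph, (M.streamRun n).counter ≤ (M.streamRun n).col t) := by
    intro n
    induction n with
    | zero => exact ⟨fun t _ => rfl, fun t _ => Nat.zero_le _⟩
    | succ n ih => rw [hsucc]; exact streamAux_inv M _ ih.1 ih.2
  refine ⟨?_, ?_, ?_⟩
  · by_contra h
    push_neg at h
    set f : ℕ → ℕ := fun n =>
      (M.maxColor + 1 - (M.streamRun n).counter) + (M.streamRun n).graph.ncard with hf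
    have hdec : ∀ n, f (n + 1) < f n := fun n => by
      rw [hf]; dsimp only; rw [hsucc]
      exact streamAux_measure M _ (hinv n).1 (hinv n).2 (h n).ne_empty
    have hb : ∀ n, f n + n ≤ f 0 := by
      intro n
      induction n with
      | zero => omega
      | succ n ih => have := hdec n; omega
    have := hb (f 0 + 1); omega
  · intro t n m hnm hne
    induction m, hnm using Nat.le_induction with
    | base => rfl
    | succ m hm ih =>
      have hnot : t ∉ (M.streamRun m).graph := fun hmem =>
        hne (ih.symm.trans ((hinv m).1 t hmem))
      rw [hsucc, streamAux_col_of_not_mem M _ hnot, ih]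
  · intro n hlt
    by_contra hne
    obtain ⟨t, ht⟩ := Set.nonempty_iff_ne_empty.mpr hne
    have h1 := (hinv n).1 t ht
    have h2 := (hinv n).2 t ht
    have h3 := streamAux_le_max M t
    omega
end

section
/- The streamlining procedure does not change the language of a structured deterministic parity automaton: for every infinite word, the parity of the least color occurring infinitely often along its run is the same in the original and the streamlined automaton. -/
open Classical

universe u v

/-!
Let `S` be the set of transitions taken infinitely often by the run; both dominating colors are
minima of a coloring over `S`, and `S` is strongly connected. Consider the first step `k` at
which streamlining removes a transition `t ∈ S`. As `S` still lies in the coloring graph, `t`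
lies on a cycle, so it is removed as a minimal-color transition of its SCC, which contains `S`:
its original color is the least original color on `S` and has the parity of the counter `i` at
step `k`. It is recolored `i`, and every other transition of `S` is removed at a later step, when
the counter is at least `i`. So the least new color on `S` is `i`.
-/

open Filter

lemma Nat.exists_le_lt_and_not_succ {P : ℕ → Prop} {k n : ℕ} (hkn : k ≤ n) (hk : P k)
    (hn : ¬ P n) : ∃ j, k ≤ j ∧ j < n ∧ P j ∧ ¬ P (j + 1) := by
  induction n, hkn using Nat.le_induction with
  | base => exact absurd hk hn
  | succ n hkn ih =>
    by_cases h : P n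
    · exact ⟨n, hkn, n.lt_succ_self, h, hn⟩
    · obtain ⟨j, hkj, hjn, hj⟩ := ih h
      exact ⟨j, hkj, hjn.trans n.lt_succ_self, hj⟩

lemma infOften_iff_frequently {f : ℕ → ℕ} {c : ℕ} : InfOften f c ↔ ∃ᶠ n in atTop, f n = c :=
  frequently_atTop.symm

lemma eventually_frequently_eq {α : Type*} [Finite α] (f : ℕ → α) :
    ∀ᶠ n in atTop, ∃ᶠ m in atTop, f m = f n := by
  have : ∀ t, ∀ᶠ n in atTop, (∃ᶠ m in atTop, f m = t) ∨ f n ≠ t := fun t => by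
    by_cases ht : ∃ᶠ m in atTop, f m = t
    · exact Eventually.of_forall fun _ => Or.inl ht
    · exact (not_frequently.mp ht).mono fun _ h => Or.inr h
  filter_upwards [eventually_all.mpr this] with n hn
  exact (hn (f n)).resolve_right fun h => h rfl

lemma setOf_infOften_comp {α : Type*} [Finite α] (f : ℕ → α) (c : α → ℕ) :
    {v | InfOften (c ∘ f) v} = c '' {t | ∃ᶠ n in atTop, f n = t} := by
  ext v
  simp only [Set.mem_ofPred_eq, infOften_iff_frequently, Set.mem_image, Function.comp_apply]
  constructor
  · intro hv
    obtain ⟨n, hfreq, hn⟩ := (hv.and_eventually (eventually_frequently_eq f)).exists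
    exact ⟨f n, hn, hfreq⟩
  · rintro ⟨t, ht, rfl⟩
    exact ht.mono fun n hn => hn ▸ rfl

namespace DPA

variable {Q : Type u} {A : Type v} (M : DPA Q A)

section Step

variable (s : SState Q A) {t : Q × A}

lemma streamStep_graph_subset : (M.streamStep s).graph ⊆ s.graph := by
  dsimp only [streamStep]
  split_ifs <;> simp

lemma counter_le_streamStep_counter : s.counter ≤ (M.streamStep s).counter := by
  dsimp only [streamStep]
  split_ifs <;> simp

lemma streamStep_col_of_not_removed (h : t ∈ s.graph → t ∈ (M.streamStep s).graph) :
    (M.streamStep s).col t = s.col t := by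
  dsimp only [streamStep] at h ⊢
  split_ifs at h ⊢ <;> simp_all

lemma streamStep_col_of_removed (h : t ∈ s.graph) (h' : t ∉ (M.streamStep s).graph) :
    (M.streamStep s).col t = s.counter := by
  dsimp only [streamStep] at h' ⊢
  split_ifs at h' ⊢ <;> simp_all

lemma transient_or_sccMinCol_of_removed (h : t ∈ s.graph) (h' : t ∉ (M.streamStep s).graph) :
    M.Transient s.graph t ∨
      (s.col t = M.sccMinCol s.graph s.col t.1 ∧ s.col t % 2 = s.counter % 2) := by
  dsimp only [streamStep] at h'
  split_ifs at h' <;> simp_all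

end Step

section Run

variable {t : Q × A}

lemma streamRun_succ (k : ℕ) : M.streamRun (k + 1) = M.streamStep (M.streamRun k) :=
  Function.iterate_succ_apply' _ _ _

lemma antitone_streamRun_graph : Antitone fun k => (M.streamRun k).graph :=
  antitone_nat_of_succ_le fun k => by
    simpa only [streamRun_succ] using M.streamStep_graph_subset _

lemma monotone_streamRun_counter : Monotone fun k => (M.streamRun k).counter :=
  monotone_nat_of_le_succ fun k => by
    simpa only [streamRun_succ] using M.counter_le_streamStep_counter _

lemma streamRun_col_of_mem {k : ℕ} (h : t ∈ (M.streamRun k).graph) :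
    (M.streamRun k).col t = M.color t.1 t.2 := by
  induction k with
  | zero => rfl
  | succ k ih =>
    rw [streamRun_succ] at h ⊢
    rw [M.streamStep_col_of_not_removed _ fun _ => h]
    exact ih (M.streamStep_graph_subset _ h)

lemma streamRun_col_of_removed {k n : ℕ} (hkn : k < n) (h : t ∈ (M.streamRun k).graph)
    (h' : t ∉ (M.streamRun (k + 1)).graph) : (M.streamRun n).col t = (M.streamRun k).counter := by
  induction n, hkn using Nat.le_induction with
  | base => rw [streamRun_succ] at h' ⊢; exact M.streamStep_col_of_removed _ h h'
  | succ n hkn ih =>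
    rw [streamRun_succ, M.streamStep_col_of_not_removed _ fun hn =>
      absurd (M.antitone_streamRun_graph hkn hn) h', ih]

lemma counter_le_streamRun_col {k n : ℕ} (hn : (M.streamRun n).graph = ∅)
    (h : t ∈ (M.streamRun k).graph) : (M.streamRun k).counter ≤ (M.streamRun n).col t := by
  have hkn : k ≤ n := by
    by_contra! hnk
    simpa [hn] using M.antitone_streamRun_graph hnk.le h
  obtain ⟨j, hkj, hjn, hj, hj'⟩ := Nat.exists_le_lt_and_not_succ
    (P := fun j => t ∈ (M.streamRun j).graph) hkn h (by simp [hn])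
  rw [M.streamRun_col_of_removed hjn hj hj']
  exact M.monotone_streamRun_counter hkj

end Run

section Graph

variable {G G' S : Set (Q × A)} {t t' : Q × A}

lemma reachIn_mono (hG : G ⊆ G') {a b : Q} (h : M.reachIn G a b) : M.reachIn G' a b :=
  Relation.ReflTransGen.mono (fun _ _ ⟨x, hx, he⟩ => ⟨x, hG hx, he⟩) _ _ h

def IsStronglyConnected (S : Set (Q × A)) : Prop :=
  ∀ t ∈ S, ∀ t' ∈ S, M.reachIn S (M.trans t.1 t.2) t'.1

variable {M}

lemma IsStronglyConnected.reachIn_fst (hS : M.IsStronglyConnected S) (ht : t ∈ S)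
    (ht' : t' ∈ S) : M.reachIn S t.1 t'.1 :=
  (Relation.ReflTransGen.single ⟨t.2, ht, rfl⟩).trans (hS t ht t' ht')

lemma IsStronglyConnected.not_transient (hS : M.IsStronglyConnected S) (hSG : S ⊆ G)
    (ht : t ∈ S) : ¬ M.Transient G t :=
  fun h => h (M.reachIn_mono hSG (hS t ht t ht))

lemma IsStronglyConnected.sccMinCol_le (hS : M.IsStronglyConnected S) (hSG : S ⊆ G)
    (col : Q × A → ℕ) (ht : t ∈ S) (ht' : t' ∈ S) : M.sccMinCol G col t.1 ≤ col t' :=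
  Nat.sInf_le ⟨t'.1, t'.2, hSG ht',
    ⟨M.reachIn_mono hSG (hS.reachIn_fst ht' ht), M.reachIn_mono hSG (hS.reachIn_fst ht ht')⟩,
    ⟨M.reachIn_mono hSG (hS t' ht' t ht),
      M.reachIn_mono hSG ((hS.reachIn_fst ht ht').tail ⟨t'.2, ht', rfl⟩)⟩, rfl⟩

end Graph

section InfTrans

variable (q : Q) (w : ℕ → A)

def infTrans : Set (Q × A) := {t | ∃ᶠ n in atTop, (M.runFrom q w n, w n) = t}

lemma domColorFrom_eq_sInf_image [Finite Q] [Finite A] :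
    M.domColorFrom q w = sInf ((fun t => M.color t.1 t.2) '' M.infTrans q w) := by
  rw [domColorFrom, infTrans, ← setOf_infOften_comp]
  rfl

lemma runFrom_recolor (c : Q × A → ℕ) : (M.recolor c).runFrom q w = M.runFrom q w := by
  funext n
  induction n with
  | zero => rfl
  | succ n ih => exact congrArg (M.trans · (w n)) ih

lemma infTrans_recolor (c : Q × A → ℕ) : (M.recolor c).infTrans q w = M.infTrans q w := by
  rw [infTrans, runFrom_recolor, infTrans]

lemma infTrans_nonempty [Finite Q] [Finite A] : (M.infTrans q w).Nonempty :=
  let ⟨_, hn⟩ := (eventually_frequently_eq fun n => (M.runFrom q w n, w n)).exists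
  ⟨_, hn⟩

lemma reachIn_runFrom {G : Set (Q × A)} {N m m' : ℕ}
    (hG : ∀ k, N ≤ k → (M.runFrom q w k, w k) ∈ G) (hm : N ≤ m) (hmm' : m ≤ m') :
    M.reachIn G (M.runFrom q w m) (M.runFrom q w m') := by
  induction m', hmm' using Nat.le_induction with
  | base => exact Relation.ReflTransGen.refl
  | succ k hmk ih => exact ih.tail ⟨w k, hG k (hm.trans hmk), rfl⟩

lemma isStronglyConnected_infTrans [Finite Q] [Finite A] :
    M.IsStronglyConnected (M.infTrans q w) := by
  intro t ht t' ht'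
  obtain ⟨N, hN⟩ := eventually_atTop.mp (eventually_frequently_eq fun n => (M.runFrom q w n, w n))
  obtain ⟨m, hNm, rfl⟩ := frequently_atTop.mp ht N
  obtain ⟨m', hmm', rfl⟩ := frequently_atTop.mp ht' (m + 1)
  exact M.reachIn_runFrom q w hN (hNm.trans m.le_succ) hmm'

end InfTrans

section Streamlining

variable {M} {S : Set (Q × A)} {n : ℕ}

lemma exists_first_removal (hn : (M.streamRun n).graph = ∅) (hS : S.Nonempty) :
    ∃ k < n, ∃ t ∈ S, S ⊆ (M.streamRun k).graph ∧ t ∉ (M.streamRun (k + 1)).graph := by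
  obtain ⟨k, -, hkn, hSk, hSk'⟩ := Nat.exists_le_lt_and_not_succ
    (P := fun j => S ⊆ (M.streamRun j).graph) n.zero_le (Set.subset_univ S)
    (by simpa [hn, Set.subset_empty_iff] using hS.ne_empty)
  obtain ⟨t, ht, ht'⟩ := Set.not_subset.mp hSk'
  exact ⟨k, hkn, t, ht, hSk, ht'⟩

lemma IsStronglyConnected.sInf_image_streamRun_col_mod_two (hS : M.IsStronglyConnected S)
    (hne : S.Nonempty) (hn : (M.streamRun n).graph = ∅) :
    sInf ((M.streamRun n).col '' S) % 2 = sInf ((fun t => M.color t.1 t.2) '' S) % 2 := by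
  obtain ⟨k, hkn, t, ht, hSk, ht'⟩ := exists_first_removal hn hne
  have htk := hSk ht
  obtain ⟨hmin, hpar⟩ := (M.transient_or_sccMinCol_of_removed _ htk
    (M.streamRun_succ k ▸ ht')).resolve_left (hS.not_transient hSk ht)
  have hnew : IsLeast ((M.streamRun n).col '' S) (M.streamRun k).counter :=
    ⟨⟨t, ht, M.streamRun_col_of_removed hkn htk ht'⟩, by
      rintro _ ⟨t', ht', rfl⟩
      exact M.counter_le_streamRun_col hn (hSk ht')⟩
  have hold : IsLeast ((fun t => M.color t.1 t.2) '' S) (M.color t.1 t.2) :=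
    ⟨⟨t, ht, rfl⟩, by
      rintro _ ⟨t', ht', rfl⟩
      calc M.color t.1 t.2 = M.sccMinCol (M.streamRun k).graph (M.streamRun k).col t.1 := by
            rw [← hmin, M.streamRun_col_of_mem htk]
        _ ≤ (M.streamRun k).col t' := hS.sccMinCol_le hSk _ ht ht'
        _ = M.color t'.1 t'.2 := M.streamRun_col_of_mem (hSk ht')⟩
  rw [hnew.csInf_eq, hold.csInf_eq, ← hpar, M.streamRun_col_of_mem htk]

end Streamlining

end DPA

theorem streamlining_preserves_language_general {Q : Type u} {A : Type v} [Fintype Q] [Fintype A]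
    (M : DPA Q A) (n : ℕ) (hn : (M.streamRun n).graph = ∅)
    (w : ℕ → A) :
    (Even ((M.recolor (M.streamRun n).col).domColorFrom M.init w) ↔
      Even (M.domColorFrom M.init w)) := by
  have key := (M.isStronglyConnected_infTrans M.init w).sInf_image_streamRun_col_mod_two
    (M.infTrans_nonempty M.init w) hn
  rw [Nat.even_iff, Nat.even_iff, DPA.domColorFrom_eq_sInf_image, DPA.domColorFrom_eq_sInf_image,
    DPA.infTrans_recolor]
  exact iff_of_eq (congrArg (· = 0) key)

/-- The streamlining procedure does not change the language of a structured
DPA: for every word, the parity of the least color occurring infinitely often along its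
run is the same in the original and the streamlined automaton. -/
theorem streamlining_preserves_language {Q : Type u} {A : Type v} [Fintype Q] [Fintype A]
    (M : DPA Q A) (hM : M.Structured) (n : ℕ) (hn : (M.streamRun n).graph = ∅)
    (w : ℕ → A) :
    (Even ((M.recolor (M.streamRun n).col).domColorFrom M.init w) ↔
      Even (M.domColorFrom M.init w)) :=
  streamlining_preserves_language_general M n hn w
end
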